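/- arXiv:2408.03382 — 4 statements merged into one kernel-verified Lean document; each statement's English description precedes it below -/
import Mathlib

section
/- Let k = 2^ℓ with ℓ ≥ 2, and let G be a group of order 4k generated by a, b with |a| = 2, |b| = 2k, and a·b = b^{k+1}·a. Then G contains exactly 3 elements of order 2. -/
/-- The group ⟨a, b : a² = 1, b^{2k} = 1, a·b·a⁻¹ = b^{k+1}⟩ of order 4k,
with k = 2^ℓ, ℓ ≥ 2, contains exactly 3 elements of order 2. -/
theorem stmt_2 {G : Type*} [Group G] (a b : G) (ℓ k : ℕ) (hℓ : 2 ≤ ℓ) (hk : k = 2 ^ ℓ)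
    (hcard : Nat.card G = 4 * k)
    (hgen : Subgroup.closure ({a, b} : Set G) = ⊤)
    (ha : orderOf a = 2) (hb : orderOf b = 2 * k)
    (hrel : a * b = b ^ (k + 1) * a) :
    Nat.card {g : G // orderOf g = 2} = 3 := by
  have hkpos : 0 < k := hk ▸ (Nat.pow_pos (by norm_num : 0 < 2) : 0 < 2 ^ ℓ)
  -- basic relations
  have haa : a * a = 1 := by
    have := pow_orderOf_eq_one a; rw [ha, sq] at this; exact this
  have hainv : a⁻¹ = a := by rw [inv_eq_iff_mul_eq_one]; exact haa
  have hb1 : b ^ (2 * k) = 1 := by rw [← hb]; exact pow_orderOf_eq_one b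
  have hconj : ∀ j : ℕ, a * b ^ j = b ^ ((k + 1) * j) * a := by
    intro j
    have h1 : a * b * a⁻¹ = b ^ (k + 1) := by rw [hrel]; group
    have h2 : a * b ^ j * a⁻¹ = b ^ ((k + 1) * j) := by
      rw [← conj_pow, h1, ← pow_mul]
    calc a * b ^ j = (a * b ^ j * a⁻¹) * a := by group
    _ = b ^ ((k + 1) * j) * a := by rw [h2]
  -- a ≠ b ^ k
  have habk : a ≠ b ^ k := by
    intro h
    have hle : (⊤ : Subgroup G) ≤ Subgroup.zpowers b := by
      rw [← hgen, Subgroup.closure_le]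
      intro x hx
      simp only [Set.mem_insert_iff, Set.mem_singleton_iff] at hx
      rcases hx with rfl | rfl
      · rw [h]
        exact pow_mem (Subgroup.mem_zpowers _) k
      · exact Subgroup.mem_zpowers _
    have htop : Subgroup.zpowers b = ⊤ := top_le_iff.mp hle
    have h2 : Nat.card G = 2 * k := by
      rw [← hb, ← Nat.card_zpowers, htop, Subgroup.card_top]
    omega
  have hbk1 : b ^ k ≠ 1 := by
    intro h
    have h2 : 2 * k ∣ k := by rw [← orderOf_dvd_iff_pow_eq_one, hb] at h; exact h
    have := Nat.le_of_dvd hkpos h2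
    omega
  have hbk2 : b ^ k * b ^ k = 1 := by
    rw [← pow_add, show k + k = 2 * k by ring]; exact hb1
  -- arithmetic helper: 2 * k ∣ (k + 2) * i → k ∣ i
  have harith : ∀ i : ℕ, 2 * k ∣ (k + 2) * i → k ∣ i := by
    intro i hdvd
    obtain ⟨m, hm⟩ : ∃ m, ℓ = m + 1 := ⟨ℓ - 1, by omega⟩
    have hk2 : k + 2 = 2 * (2 ^ m + 1) := by
      rw [hk, hm, pow_succ]; ring
    have h2 : 2 * k ∣ 2 * ((2 ^ m + 1) * i) := by
      rw [show 2 * ((2 ^ m + 1) * i) = (k + 2) * i by rw [hk2]; ring]; exact hdvd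
    have h3 : k ∣ (2 ^ m + 1) * i := (mul_dvd_mul_iff_left (by norm_num : (2:ℕ) ≠ 0)).mp h2
    have hcop : Nat.Coprime k (2 ^ m + 1) := by
      rw [hk]
      apply Nat.Coprime.pow_left
      have h2m : (2:ℕ) ∣ 2 ^ m := dvd_pow_self 2 (by omega)
      exact (Nat.prime_two.coprime_iff_not_dvd).mpr (by omega)
    exact hcop.dvd_of_dvd_mul_left h3
  -- every element is b^i or b^i * a
  have hrep : ∀ g : G, ∃ i : ℕ, g = b ^ i ∨ g = b ^ i * a := by
    intro g
    have hg : g ∈ Subgroup.closure ({a, b} : Set G) := by rw [hgen]; trivial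
    induction hg using Subgroup.closure_induction with
    | mem x hx =>
      rcases hx with hx | hx
      · exact ⟨0, Or.inr (by simp [hx])⟩
      · simp only [Set.mem_singleton_iff] at hx; exact ⟨1, Or.inl (by simp [hx])⟩
    | one => exact ⟨0, Or.inl (by simp)⟩
    | mul x y hx hy ihx ihy =>
      obtain ⟨i, hi⟩ := ihx
      obtain ⟨j, hj⟩ := ihy
      rcases hi with hi | hi <;> rcases hj with hj | hj
      · exact ⟨i + j, Or.inl (by rw [hi, hj, pow_add])⟩
      · exact ⟨i + j, Or.inr (by rw [hi, hj, pow_add, mul_assoc])⟩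
      · refine ⟨i + (k + 1) * j, Or.inr ?_⟩
        rw [hi, hj]
        calc b ^ i * a * b ^ j = b ^ i * (a * b ^ j) := by group
        _ = b ^ i * (b ^ ((k+1)*j) * a) := by rw [hconj j]
        _ = b ^ (i + (k+1)*j) * a := by rw [pow_add]; group
      · refine ⟨i + (k + 1) * j, Or.inl ?_⟩
        rw [hi, hj]
        calc b ^ i * a * (b ^ j * a) = b ^ i * (a * b ^ j) * a := by group
        _ = b ^ i * (b ^ ((k+1)*j) * a) * a := by rw [hconj j]
        _ = b ^ i * b ^ ((k+1)*j) * (a * a) := by group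
        _ = b ^ (i + (k+1)*j) := by rw [haa, pow_add]; group
    | inv x hx ihx =>
      obtain ⟨i, hi⟩ := ihx
      have hbinv : (b ^ i)⁻¹ = b ^ ((2 * k - 1) * i) := by
        rw [inv_eq_iff_mul_eq_one, ← pow_add]
        have he : i + (2 * k - 1) * i = 2 * k * i := by
          have h1 : 2 * k - 1 + 1 = 2 * k := by omega
          calc i + (2 * k - 1) * i = ((2 * k - 1) + 1) * i := by ring
          _ = 2 * k * i := by rw [h1]
        rw [he, pow_mul, hb1, one_pow]
      rcases hi with hi | hi
      · exact ⟨(2 * k - 1) * i, Or.inl (by rw [hi, hbinv])⟩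
      · refine ⟨(k + 1) * ((2 * k - 1) * i), Or.inr ?_⟩
        rw [hi, mul_inv_rev, hainv, hbinv, hconj]
  -- elements of order 2
  haveI : Fact (Nat.Prime 2) := ⟨Nat.prime_two⟩
  have hset : {g : G | orderOf g = 2} = {b ^ k, a, b ^ k * a} := by
    ext g
    simp only [Set.mem_setOf_eq, Set.mem_insert_iff, Set.mem_singleton_iff]
    constructor
    · intro hg
      have hg2 : g ^ 2 = 1 := by rw [← hg]; exact pow_orderOf_eq_one g
      have hg1 : g ≠ 1 := by intro h; rw [h, orderOf_one] at hg; norm_num at hg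
      obtain ⟨i, hi⟩ := hrep g
      rcases hi with hi | hi
      · -- g = b ^ i
        left
        have hdvd : 2 * k ∣ 2 * i := by
          rw [← hb, orderOf_dvd_iff_pow_eq_one, mul_comm, pow_mul, ← hi]
          exact hg2
        have hki : k ∣ i := (mul_dvd_mul_iff_left (by norm_num : (2:ℕ) ≠ 0)).mp hdvd
        obtain ⟨m, rfl⟩ := hki
        rcases Nat.even_or_odd m with hm | hm
        · obtain ⟨t, rfl⟩ := hm
          exfalso
          apply hg1
          rw [hi, show k * (t + t) = 2 * k * t by ring, pow_mul, hb1, one_pow]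
        · obtain ⟨t, rfl⟩ := hm
          rw [hi, show k * (2 * t + 1) = 2 * k * t + k by ring, pow_add, pow_mul, hb1, one_pow,
            one_mul]
      · -- g = b ^ i * a
        have hsq : g ^ 2 = b ^ ((k + 2) * i) := by
          rw [hi, sq]
          calc b ^ i * a * (b ^ i * a) = b ^ i * (a * b ^ i) * a := by group
          _ = b ^ i * (b ^ ((k+1)*i) * a) * a := by rw [hconj i]
          _ = b ^ i * b ^ ((k+1)*i) * (a * a) := by group
          _ = b ^ ((k + 2) * i) := by
              rw [haa, mul_one, ← pow_add]
              congr 1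
              ring
        have hdvd : 2 * k ∣ (k + 2) * i := by
          rw [← hb, orderOf_dvd_iff_pow_eq_one, ← hsq]
          exact hg2
        have hki : k ∣ i := harith i hdvd
        obtain ⟨m, rfl⟩ := hki
        rcases Nat.even_or_odd m with hm | hm
        · obtain ⟨t, rfl⟩ := hm
          right; left
          rw [hi, show k * (t + t) = 2 * k * t by ring, pow_mul, hb1, one_pow, one_mul]
        · obtain ⟨t, rfl⟩ := hm
          right; right
          rw [hi, show k * (2 * t + 1) = 2 * k * t + k by ring, pow_add, pow_mul, hb1, one_pow,
            one_mul]
    · intro hg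
      rcases hg with hg | hg | hg
      · subst hg
        exact orderOf_eq_prime (by rw [sq]; exact hbk2) hbk1
      · subst hg; exact ha
      · subst hg
        apply orderOf_eq_prime
        · rw [sq]
          calc b ^ k * a * (b ^ k * a) = b ^ k * (a * b ^ k) * a := by group
          _ = b ^ k * (b ^ ((k+1)*k) * a) * a := by rw [hconj k]
          _ = b ^ k * b ^ ((k+1)*k) * (a * a) := by group
          _ = b ^ ((k + 2) * k) := by rw [haa, mul_one, ← pow_add]; congr 1; ring
          _ = 1 := by
              obtain ⟨m, hm⟩ : ∃ m, ℓ = m + 1 := ⟨ℓ - 1, by omega⟩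
              have : (k + 2) * k = 2 * k * (2 ^ m + 1) := by
                rw [hk, hm, pow_succ]; ring
              rw [this, pow_mul, hb1, one_pow]
        · intro h
          apply habk
          have : a = (b ^ k)⁻¹ := eq_inv_of_mul_eq_one_right h
          rw [this, inv_eq_iff_mul_eq_one]; exact hbk2
  -- count
  have h1 : Nat.card {g : G // orderOf g = 2} = ({b ^ k, a, b ^ k * a} : Set G).ncard := by
    rw [← Nat.card_coe_set_eq, ← hset]
    rfl
  rw [h1]
  have hne1 : b ^ k ≠ a := fun h => habk h.symm
  have hne2 : b ^ k ≠ b ^ k * a := by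
    intro h
    have : a = 1 := by
      have := mul_left_cancel (a := b ^ k) (b := 1) (c := a) (by rw [mul_one]; exact h)
      exact this.symm
    rw [this, orderOf_one] at ha; norm_num at ha
  have hne3 : a ≠ b ^ k * a := by
    intro h
    apply hbk1
    have := mul_right_cancel (b := a) (a := (1 : G)) (c := b ^ k) (by rw [one_mul]; exact h)
    exact this.symm
  rw [Set.ncard_insert_of_notMem (by simp [hne1, hne2]),
    Set.ncard_pair hne3]
end

section
/- Let k = 2^ℓ with ℓ ≥ 2, and let G be a group of order 4k generated by a, b with |a| = 2, |b| = 2k, and a·b = b^{k-1}·a. Then G contains exactly k + 1 elements of order 2. -/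
/-!
The cyclic subgroup `H = ⟨b⟩` has order `2k`, hence index 2, and `a ∉ H` since `a, b` generate `G`.
Inside `H` the only involution is `b ^ k`. Every element outside `H` is `h * a` with `h ∈ H`, and
the relation gives `(h * a) ^ 2 = h ^ k`; so `h * a` is an involution exactly when `h ^ k = 1`,
i.e. when `h` lies in `⟨b ^ 2⟩`, a group of order `k`.
-/

open Subgroup

section

variable {G : Type*} [Group G]

theorem pow_eq_one_iff_mem_zpowers_pow {b h : G} {m d : ℕ} (hb : orderOf b = m * d) (hd : d ≠ 0)
    (hh : h ∈ zpowers b) : h ^ d = 1 ↔ h ∈ zpowers (b ^ m) := by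
  obtain ⟨t, rfl⟩ := mem_zpowers_iff.mp hh
  constructor
  · intro h1
    rw [← zpow_natCast, ← zpow_mul, ← orderOf_dvd_iff_zpow_eq_one, hb, Nat.cast_mul,
      Int.mul_dvd_mul_iff_right (by exact_mod_cast hd)] at h1
    obtain ⟨s, rfl⟩ := h1
    exact ⟨s, by simp only [← zpow_natCast, ← zpow_mul]⟩
  · rintro ⟨s, hs⟩
    rw [← hs, ← zpow_natCast, ← zpow_natCast, ← zpow_mul, ← zpow_mul,
      ← orderOf_dvd_iff_zpow_eq_one, hb]
    exact ⟨s, by push_cast; ring⟩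

theorem mem_zpowers_iff_of_orderOf_eq_two {x y : G} (hx : orderOf x = 2) :
    y ∈ zpowers x ↔ y = 1 ∨ y = x := by
  classical
  rw [(orderOf_pos_iff.mp (by omega)).mem_zpowers_iff_mem_range_orderOf, hx]
  simp [Nat.le_one_iff_eq_zero_or_eq_one, or_and_right, exists_or, eq_comm]

theorem orderOf_eq_two_iff_eq_pow_of_mem_zpowers {b h : G} {k : ℕ} (hb : orderOf b = 2 * k)
    (hk : k ≠ 0) (hh : h ∈ zpowers b) : orderOf h = 2 ↔ h = b ^ k := by
  have hbk : orderOf (b ^ k) = 2 := by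
    rw [orderOf_pow_of_dvd hk (hb ▸ dvd_mul_left k 2), hb,
      Nat.mul_div_cancel _ (Nat.pos_of_ne_zero hk)]
  rw [orderOf_eq_prime_iff, pow_eq_one_iff_mem_zpowers_pow (by rw [hb, mul_comm]) two_ne_zero hh,
    mem_zpowers_iff_of_orderOf_eq_two hbk]
  have hbk1 : b ^ k ≠ 1 := fun h1 => by simp [h1] at hbk
  constructor
  · rintro ⟨h1 | hk', h1'⟩
    exacts [absurd h1 h1', hk']
  · rintro rfl
    exact ⟨Or.inr rfl, hbk1⟩

theorem SemiconjBy.of_mem_zpowers {a b h : G} {m : ℕ} (hab : SemiconjBy a b (b ^ m))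
    (hh : h ∈ zpowers b) : SemiconjBy a h (h ^ m) := by
  obtain ⟨t, rfl⟩ := mem_zpowers_iff.mp hh
  simpa only [← zpow_natCast, ← zpow_mul, mul_comm] using hab.zpow_right t

theorem SemiconjBy.mul_sq_eq {a h : G} {m : ℕ} (hah : SemiconjBy a h (h ^ m)) :
    (h * a) ^ 2 = h ^ (m + 1) * a ^ 2 := by
  rw [sq, sq, pow_succ', mul_assoc, ← mul_assoc a, hah.eq]
  group

theorem mul_inv_mem_iff_of_index_eq_two {H : Subgroup G} (hH : H.index = 2) {a g : G}
    (ha : a ∉ H) : g * a⁻¹ ∈ H ↔ g ∉ H := by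
  rw [mul_mem_iff_of_index_two hH, inv_mem_iff]
  tauto

theorem notMem_zpowers_of_closure_pair_eq_top {a b : G} (hgen : closure {a, b} = ⊤)
    (hb : zpowers b ≠ ⊤) : a ∉ zpowers b := by
  refine fun ha => hb (eq_top_iff.mpr (hgen ▸ (closure_le _).mpr ?_))
  rintro x (rfl | rfl)
  exacts [ha, mem_zpowers x]

theorem orderOf_eq_two_iff_of_index_zpowers_eq_two {a b g : G} {k : ℕ}
    (hindex : (zpowers b).index = 2) (haH : a ∉ zpowers b) (ha : a ^ 2 = 1)
    (hb : orderOf b = 2 * k) (hk : k ≠ 0) (hrel : a * b = b ^ (k - 1) * a) :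
    orderOf g = 2 ↔ g = b ^ k ∨ g * a⁻¹ ∈ zpowers (b ^ 2) := by
  have hcoset : g * a⁻¹ ∈ zpowers b ↔ g ∉ zpowers b := mul_inv_mem_iff_of_index_eq_two hindex haH
  have hsq_le : zpowers (b ^ 2) ≤ zpowers b := zpowers_le.mpr (npow_mem_zpowers b 2)
  by_cases hg : g ∈ zpowers b
  · have : g * a⁻¹ ∉ zpowers (b ^ 2) := fun hmem => hcoset.mp (hsq_le hmem) hg
    rw [orderOf_eq_two_iff_eq_pow_of_mem_zpowers hb hk hg]
    tauto
  · set h := g * a⁻¹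
    have hh : h ∈ zpowers b := hcoset.mpr hg
    have hg_eq : g = h * a := by simp [h]
    have hbk : g ≠ b ^ k := fun he => hg (he ▸ npow_mem_zpowers b k)
    have hsq : g ^ 2 = h ^ k := by
      rw [hg_eq, (SemiconjBy.of_mem_zpowers hrel hh).mul_sq_eq, Nat.sub_add_cancel
        (Nat.one_le_iff_ne_zero.mpr hk), ha, mul_one]
    rw [orderOf_eq_prime_iff, hsq, pow_eq_one_iff_mem_zpowers_pow hb hk hh]
    have hg1 : g ≠ 1 := fun he => hg (he ▸ one_mem _)
    tauto

theorem card_orderOf_eq_two_of_index_zpowers_eq_two [Finite G] {a b : G} {k : ℕ}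
    (hindex : (zpowers b).index = 2) (haH : a ∉ zpowers b) (ha : a ^ 2 = 1)
    (hb : orderOf b = 2 * k) (hk : k ≠ 0) (hrel : a * b = b ^ (k - 1) * a) :
    Nat.card {g : G // orderOf g = 2} = k + 1 := by
  have hset : {g : G | orderOf g = 2} =
      insert (b ^ k) ((fun h => h * a) '' (zpowers (b ^ 2) : Set G)) := by
    ext g
    rw [Set.image_mul_right]
    exact orderOf_eq_two_iff_of_index_zpowers_eq_two hindex haH ha hb hk hrel
  have hbk : b ^ k ∉ (fun h => h * a) '' (zpowers (b ^ 2) : Set G) := by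
    rw [Set.image_mul_right]
    exact fun hmem => (mul_inv_mem_iff_of_index_eq_two hindex haH).mp
      (zpowers_le.mpr (npow_mem_zpowers b 2) hmem) (npow_mem_zpowers b k)
  rw [← Set.coe_ofPred, Nat.card_coe_set_eq, hset, Set.ncard_insert_of_notMem hbk,
    Set.ncard_image_of_injective _ (mul_left_injective a), ← Nat.card_coe_set_eq,
    SetLike.coe_sort_coe, Nat.card_zpowers,
    orderOf_pow_of_dvd two_ne_zero (hb ▸ dvd_mul_right 2 k), hb, Nat.mul_div_cancel_left k two_pos]

end

theorem stmt_3_general {G : Type*} [Group G] (a b : G) (k : ℕ)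
    (hcard : Nat.card G = 4 * k)
    (hgen : Subgroup.closure ({a, b} : Set G) = ⊤)
    (ha : orderOf a = 2) (hb : orderOf b = 2 * k)
    (hrel : a * b = b ^ (k - 1) * a) :
    Nat.card {g : G // orderOf g = 2} = k + 1 := by
  have hk : k ≠ 0 := by
    rintro rfl
    rw [Nat.zero_sub, pow_zero, one_mul, mul_eq_left] at hrel
    simp [hrel] at hb
  have hindex : (zpowers b).index = 2 := by
    have := card_mul_index (zpowers b)
    rw [Nat.card_zpowers, hb, hcard] at this
    exact Nat.eq_of_mul_eq_mul_left (by omega : 0 < 2 * k) (by linarith)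
  have : Finite G := Nat.finite_of_card_ne_zero (by omega)
  have haH : a ∉ zpowers b :=
    notMem_zpowers_of_closure_pair_eq_top hgen (by rw [Ne, ← index_eq_one, hindex]; decide)
  exact card_orderOf_eq_two_of_index_zpowers_eq_two hindex haH (ha ▸ pow_orderOf_eq_one a)
    hb hk hrel

/-- The group ⟨a, b : a² = 1, b^{2k} = 1, a·b·a⁻¹ = b^{k-1}⟩ of order 4k,
with k = 2^ℓ, ℓ ≥ 2, contains exactly k + 1 elements of order 2. -/
theorem stmt_3 {G : Type*} [Group G] (a b : G) (ℓ k : ℕ) (hℓ : 2 ≤ ℓ) (hk : k = 2 ^ ℓ)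
    (hcard : Nat.card G = 4 * k)
    (hgen : Subgroup.closure ({a, b} : Set G) = ⊤)
    (ha : orderOf a = 2) (hb : orderOf b = 2 * k)
    (hrel : a * b = b ^ (k - 1) * a) :
    Nat.card {g : G // orderOf g = 2} = k + 1 :=
  stmt_3_general a b k hcard hgen ha hb hrel
end

section
/- Let t be an even integer with 2 ≤ t, and let C be a t-cycle on elements c_{i_0}, …, c_{i_{t-1}}. Then the t elements C^{t-2}(c_{i_0}), C^{t-4}(c_{i_1}), …, C^{0}(c_{i_{(t-2)/2}}), C^{t-2}(c_{i_{t/2}}), C^{t-4}(c_{i_{(t+2)/2}}), …, C^{0}(c_{i_{t-1}}) are pairwise distinct. -/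
/-!
Since `C ^ k` sends `c s` to `c (s + k)`, the `s`-th element is `c (s + e s)` with
`e s = t - 2 - 2 (s mod t/2)`. For `s` in either half of `{0, …, t-1}` the index `s + e s` is
`-s - 2` modulo `t`, so the family is `c` composed with the reflection `s ↦ -s - 2` of `ℤ/tℤ`.
-/

theorem Equiv.Perm.pow_apply_eq_add_natCast {X R : Type*} [AddMonoidWithOne R]
    {σ : Equiv.Perm X} {c : R → X} (hσ : ∀ s, σ (c s) = c (s + 1)) (k : ℕ) (s : R) :
    (σ ^ k) (c s) = c (s + k) := by
  induction k with
  | zero => simp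
  | succ k ih => rw [pow_succ', Equiv.Perm.mul_apply, ih, hσ, Nat.cast_succ, add_assoc]

theorem Nat.dvd_two_mul_add_sub_two_mul_mod_half {t v : ℕ} (hev : Even t)
    (hv : v < t) : t ∣ 2 * v + (t - 2 - 2 * (v % (t / 2))) + 2 := by
  obtain ⟨h, rfl⟩ := hev
  have hh : (h + h) / 2 = h := by omega
  rw [hh]
  have hr : v % h < h := Nat.mod_lt v (by omega)
  have hq : v / h < 2 := Nat.div_lt_of_lt_mul (by omega)
  have hdecomp := Nat.mod_add_div v h
  -- writing `v = r + h q` with `q ∈ {0, 1}`, the sum is `t (1 + q)`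
  refine ⟨1 + v / h, ?_⟩
  generalize v % h = r at *
  generalize v / h = q at *
  interval_cases q <;> simp only [mul_zero, mul_one, add_zero] at hdecomp ⊢ <;> omega

theorem ZMod.add_natCast_sub_two_sub_two_mul_val_mod_half {t : ℕ} (ht : 2 ≤ t) (hev : Even t)
    (s : ZMod t) : s + ((t - 2 - 2 * (s.val % (t / 2)) : ℕ) : ZMod t) = -s - 2 := by
  have : NeZero t := ⟨by omega⟩
  have hzero : ((2 * s.val + (t - 2 - 2 * (s.val % (t / 2))) + 2 : ℕ) : ZMod t) = 0 :=
    (ZMod.natCast_eq_zero_iff _ _).mpr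
      (Nat.dvd_two_mul_add_sub_two_mul_mod_half hev s.val_lt)
  push_cast [ZMod.natCast_val, ZMod.cast_id] at hzero
  linear_combination hzero

/-- Lemma 4.5 (part A): for a t-cycle C on c₀,…,c_{t-1} (t even), the elements
C^{t-2-2(s mod (t/2))}(c_s), s = 0,…,t-1, are pairwise distinct. -/
theorem stmt_13 {X : Type*} (t : ℕ) (ht : 2 ≤ t) (hev : Even t)
    (c : ZMod t → X) (hc : Function.Bijective c)
    (C : Equiv.Perm X) (hC : ∀ s : ZMod t, C (c s) = c (s + 1)) :
    Function.Injective
      (fun s : ZMod t => (C ^ (t - 2 - 2 * (s.val % (t / 2)))) (c s)) := by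
  intro s₁ s₂ h
  simp only [Equiv.Perm.pow_apply_eq_add_natCast hC,
    ZMod.add_natCast_sub_two_sub_two_mul_val_mod_half ht hev] at h
  simpa using hc.injective h
end

section
/- Let q = 2^m with m ≥ 3 and t = q/2. In the dihedral group G = ⟨a, b : a² = 1, b^t = 1, ab = b⁻¹a⟩ of order q acting sharply transitively and fixed-point-freely on a q-set X, there exists a permutation h of X such that for every g ∈ G, h and g agree at exactly one point of X. -/
/-- index-to-group-element map for the dihedral group generated by `b`, `a`. -/
def dElem {X : Type*} (b a : Equiv.Perm X) {t : ℕ} (p : ZMod t × Bool) : Equiv.Perm X :=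
  b ^ p.1.val * (bif p.2 then a else 1)

/-- multiplication in coordinates:  `b^i aᵉ * b^j aᵈ = b^(i ± j) a^(ε xor δ)`. -/
def dComb {t : ℕ} (p q : ZMod t × Bool) : ZMod t × Bool :=
  ((bif p.2 then p.1 - q.1 else p.1 + q.1), xor p.2 q.2)

/-- the explicit orthomorphism of the dihedral group, in coordinates. -/
def dTheta (t : ℕ) (p : ZMod t × Bool) : ZMod t × Bool :=
  if p.1.val < t / 2 then (bif p.2 then (1 - p.1, true) else p)
  else (bif p.2 then (p.1, false) else (1 - p.1, true))

/-- Theorem 4.7: for the dihedral group G = ⟨a, b : a² = 1, b^{q/2} = 1,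
ab = b⁻¹a⟩ of order q = 2^m (m ≥ 3) acting fixed-point-freely on a q-set X,
there exists a permutation h of X intersecting every element of G simply. -/
theorem stmt_19 {X : Type*} [Fintype X] (m q t : ℕ) (hm : 3 ≤ m)
    (hq : q = 2 ^ m) (htq : t = q / 2) (hX : Fintype.card X = q)
    (a b : Equiv.Perm X)
    (G : Subgroup (Equiv.Perm X))
    (hG : G = Subgroup.closure ({a, b} : Set (Equiv.Perm X)))
    (ha : orderOf a = 2) (hb : orderOf b = t)
    (hrel : a * b = b⁻¹ * a)
    (hcard : Nat.card G = q)
    (hfpf : ∀ g ∈ G, g ≠ 1 → ∀ x : X, g x ≠ x) :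
    ∃ h : Equiv.Perm X, ∀ g ∈ G, ∃! x : X, h x = g x := by
  classical
  -- numeric facts
  have hpow : (2:ℕ) ^ m = 2 * 2 ^ (m - 1) := by
    conv_lhs => rw [show m = (m-1)+1 by omega]
    ring
  have hpow2 : (2:ℕ) ^ (m-1) = 2 * 2 ^ (m - 2) := by
    conv_lhs => rw [show m - 1 = (m-2)+1 by omega]
    ring
  have ht : t = 2 ^ (m - 1) := by omega
  have ht4 : 4 ≤ t := by
    have h1 : (2:ℕ)^2 ≤ 2 ^ (m-1) := Nat.pow_le_pow_right (by norm_num) (by omega)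
    omega
  have htt : 2 * (t / 2) = t := by omega
  haveI : NeZero t := ⟨by omega⟩
  haveI : Fact (1 < t) := ⟨by omega⟩
  have hvt : ∀ x : ZMod t, x.val < t := fun x => ZMod.val_lt x
  -- group facts
  have haG : a ∈ G := by rw [hG]; exact Subgroup.subset_closure (by simp)
  have hbG : b ∈ G := by rw [hG]; exact Subgroup.subset_closure (by simp)
  have ha2 : a * a = 1 := by
    have h1 := pow_orderOf_eq_one a
    rwa [ha, pow_two] at h1
  have hb2 : b * b ≠ 1 := by
    intro h
    have h2 : b ^ 2 = 1 := by rwa [pow_two]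
    have h3 := orderOf_dvd_of_pow_eq_one h2
    rw [hb] at h3
    have := Nat.le_of_dvd (by norm_num) h3
    omega
  have hconj : ∀ n : ℕ, a * b ^ n = (b ^ n)⁻¹ * a := by
    intro n
    have hs : SemiconjBy a b b⁻¹ := hrel
    have h1 := hs.pow_right n
    rwa [inv_pow] at h1
  have hpow_val : ∀ n : ℕ, b ^ n = b ^ ((n : ZMod t)).val := by
    intro n
    rw [pow_eq_pow_iff_modEq, hb, ZMod.val_natCast]
    exact (Nat.mod_modEq n t).symm
  have hBadd : ∀ i j : ZMod t, b ^ (i + j).val = b ^ i.val * b ^ j.val := by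
    intro i j
    have h1 : ((i.val + j.val : ℕ) : ZMod t) = i + j := by
      push_cast [ZMod.natCast_zmod_val]; ring
    rw [← pow_add, hpow_val (i.val + j.val), h1]
  have hBneg : ∀ j : ZMod t, b ^ (-j).val = (b ^ j.val)⁻¹ := by
    intro j
    apply eq_inv_of_mul_eq_one_left
    rw [← hBadd, neg_add_cancel]
    simp
  have hconj' : ∀ j : ZMod t, a * b ^ j.val = b ^ (-j).val * a := by
    intro j; rw [hconj, hBneg]
  -- multiplication in coordinates
  have helem_mul : ∀ p q : ZMod t × Bool,
      dElem b a (dComb p q) = dElem b a p * dElem b a q := by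
    rintro ⟨i, ε⟩ ⟨j, δ⟩
    cases ε <;> cases δ <;>
      simp only [dElem, dComb, Bool.xor_false, Bool.xor_true, Bool.not_true, Bool.not_false,
        Bool.cond_false, Bool.cond_true, mul_one]
    · exact hBadd i j
    · rw [hBadd, mul_assoc]
    · rw [show b ^ i.val * a * b ^ j.val = b ^ i.val * (a * b ^ j.val) by group,
        hconj' j, ← mul_assoc, ← hBadd, sub_eq_add_neg]
    · rw [show b ^ i.val * a * (b ^ j.val * a) = b ^ i.val * (a * b ^ j.val) * a by group,
        hconj' j, mul_assoc, mul_assoc, ha2, mul_one, ← hBadd, sub_eq_add_neg]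
  have helem_mem : ∀ p : ZMod t × Bool, dElem b a p ∈ G := by
    rintro ⟨i, ε⟩
    cases ε
    · simpa [dElem] using pow_mem hbG i.val
    · simpa [dElem] using mul_mem (pow_mem hbG i.val) haG
  -- a is not a power of b
  have key : ∀ k : ZMod t, a ≠ b ^ k.val := by
    intro k hk
    have hcomm : a * b = b * a := by
      rw [hk, ← pow_succ, ← pow_succ']
    rw [hrel] at hcomm
    have h1 : b⁻¹ = b := mul_right_cancel hcomm
    apply hb2
    nth_rewrite 1 [← h1]
    exact inv_mul_cancel b
  have hmix : ∀ i j : ZMod t, b ^ i.val ≠ b ^ j.val * a := by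
    intro i j h
    exact key (-j + i) (by rw [hBadd, hBneg, h, inv_mul_cancel_left])
  have hij : ∀ i j : ZMod t, b ^ i.val = b ^ j.val → i = j := by
    intro i j h
    rw [pow_eq_pow_iff_modEq, hb] at h
    have h2 : i.val % t = j.val % t := h
    rw [Nat.mod_eq_of_lt (hvt i), Nat.mod_eq_of_lt (hvt j)] at h2
    exact ZMod.val_injective t h2
  have helem_inj : Function.Injective (dElem b a (t := t)) := by
    rintro ⟨i, ε⟩ ⟨j, δ⟩ hpq
    cases ε <;> cases δ <;>
      simp only [dElem, Bool.cond_false, Bool.cond_true, mul_one] at hpq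
    · rw [hij i j hpq]
    · exact absurd hpq (hmix i j)
    · exact absurd hpq.symm (hmix j i)
    · rw [hij i j (mul_right_cancel hpq)]
  -- base point and the identification of X with coordinates
  have hne : Nonempty X := by
    apply Fintype.card_pos_iff.mp
    rw [hX, hq]
    positivity
  obtain ⟨x₀⟩ := hne
  set e0 : ZMod t × Bool → X := fun p => dElem b a p x₀ with he0
  have he0inj : Function.Injective e0 := by
    intro p q h
    by_contra hne
    have hne' : dElem b a p ≠ dElem b a q := fun hh => hne (helem_inj hh)
    have hgmem : (dElem b a q)⁻¹ * dElem b a p ∈ G :=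
      mul_mem (inv_mem (helem_mem q)) (helem_mem p)
    have hg1 : (dElem b a q)⁻¹ * dElem b a p ≠ 1 := by
      intro hh
      exact hne' (by rwa [inv_mul_eq_one, eq_comm] at hh)
    apply hfpf _ hgmem hg1 x₀
    simp only [Equiv.Perm.mul_apply]
    rw [show dElem b a p x₀ = dElem b a q x₀ from h]
    exact Equiv.symm_apply_apply _ _
  have hcardI : Fintype.card (ZMod t × Bool) = Fintype.card X := by
    rw [Fintype.card_prod, ZMod.card, Fintype.card_bool, hX]
    omega
  have he0bij : Function.Bijective e0 :=
    (Fintype.bijective_iff_injective_and_card e0).mpr ⟨he0inj, hcardI⟩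
  set e : (ZMod t × Bool) ≃ X := Equiv.ofBijective e0 he0bij with hedef
  have heapp : ∀ p, e p = dElem b a p x₀ := fun p => rfl
  -- classification of elements of G
  have hclass : ∀ g ∈ G, ∃ p : ZMod t × Bool, g = dElem b a p := by
    intro g hg
    rw [hG] at hg
    induction hg using Subgroup.closure_induction with
    | mem x hx =>
      rcases hx with rfl | rfl
      · exact ⟨((0 : ZMod t), true), by simp [dElem]⟩
      · exact ⟨((1 : ZMod t), false), by simp [dElem, ZMod.val_one]⟩
    | one => exact ⟨((0 : ZMod t), false), by simp [dElem]⟩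
    | mul x y hx hy ihx ihy =>
      obtain ⟨p, rfl⟩ := ihx
      obtain ⟨q, rfl⟩ := ihy
      exact ⟨dComb p q, (helem_mul p q).symm⟩
    | inv x hx ihx =>
      obtain ⟨⟨i, ε⟩, rfl⟩ := ihx
      cases ε
      · refine ⟨(-i, false), ?_⟩
        simp only [dElem, Bool.cond_false, mul_one]
        rw [hBneg]
      · refine ⟨(i, true), ?_⟩
        have h1 : dElem b a (i, true) * dElem b a (i, true) = 1 := by
          rw [← helem_mul]
          simp [dComb, dElem]
        exact inv_eq_of_mul_eq_one_right h1
  -- arithmetic lemmas in ZMod t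
  have hL1 : ∀ x : ZMod t, x + x ≠ 1 := by
    intro x hx
    have h2 : (2:ℕ) ∣ t := ⟨t/2, by omega⟩
    have h3 := congrArg (ZMod.castHom h2 (ZMod 2)) hx
    rw [map_add, map_one] at h3
    have h0 : ∀ y : ZMod 2, y + y = 0 := by decide
    rw [h0] at h3
    exact absurd h3 (by decide)
  have hhalf : ((t/2 : ℕ) : ZMod t).val = t/2 := ZMod.val_cast_of_lt (by omega)
  have hL2 : ∀ x y : ZMod t, x + x = y + y → x = y ∨ x = y + ((t/2 : ℕ) : ZMod t) := by
    intro x y h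
    have hd : (x - y) + (x - y) = 0 := by linear_combination h
    set d := x - y with hdd
    have hd2 : ((d.val + d.val : ℕ) : ZMod t) = 0 := by
      push_cast [ZMod.natCast_zmod_val]
      exact hd
    have hdvd : t ∣ d.val + d.val := (ZMod.natCast_eq_zero_iff _ _).mp hd2
    obtain ⟨k, hk⟩ := hdvd
    have hdv := hvt d
    have hk2 : k < 2 := by
      by_contra hk2
      push_neg at hk2
      have : t * 2 ≤ t * k := Nat.mul_le_mul_left t hk2
      omega
    have hval : d.val = 0 ∨ d.val = t/2 := by
      interval_cases k <;> omega
    rcases hval with h0 | hh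
    · left
      have : d = 0 := by rw [← ZMod.natCast_zmod_val d, h0]; simp
      rw [hdd] at this
      exact sub_eq_zero.mp this
    · right
      have h5 : d = ((t/2 : ℕ) : ZMod t) := by rw [← ZMod.natCast_zmod_val d, hh]
      rw [hdd] at h5
      rw [sub_eq_iff_eq_add] at h5
      rw [h5]; ring
  have hvaddA : ∀ y : ZMod t, y.val < t/2 → (y + ((t/2:ℕ) : ZMod t)).val = y.val + t/2 := by
    intro y hy
    rw [ZMod.val_add, hhalf, Nat.mod_eq_of_lt (by omega)]
  have hvaddB : ∀ y : ZMod t, t/2 ≤ y.val → (y + ((t/2:ℕ) : ZMod t)).val = y.val - t/2 := by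
    intro y hy
    rw [ZMod.val_add, hhalf]
    have hlt := hvt y
    rw [Nat.mod_eq_sub_mod (by omega), Nat.mod_eq_of_lt (by omega)]
    omega
  have hL2A : ∀ x y : ZMod t, x.val < t/2 → y.val < t/2 → x + x = y + y → x = y := by
    intro x y hx hy h
    rcases hL2 x y h with h | h
    · exact h
    · exfalso
      rw [h, hvaddA y hy] at hx
      omega
  have hL2B : ∀ x y : ZMod t, t/2 ≤ x.val → t/2 ≤ y.val → x + x = y + y → x = y := by
    intro x y hx hy h
    rcases hL2 x y h with h | h
    · exact h
    · exfalso
      rw [h, hvaddB y hy] at hx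
      have := hvt y
      omega
  -- theta is injective (hence bijective)
  have hθinj : Function.Injective (dTheta t) := by
    rintro ⟨i, ε⟩ ⟨j, δ⟩ h
    by_cases hi : i.val < t/2 <;> by_cases hj : j.val < t/2 <;> cases ε <;> cases δ <;>
      simp only [dTheta, hi, hj, Bool.cond_false, Bool.cond_true, ite_true, ite_false, if_true, if_false,
        Prod.mk.injEq, Bool.false_eq_true, Bool.true_eq_false, and_true, and_false] at h
    · rw [h]
    · rw [sub_right_injective h]
    · exfalso; rw [h] at hi; exact hj hi
    · exfalso; rw [sub_right_injective h] at hi; exact hj hi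
    · exfalso; rw [sub_right_injective h] at hi; exact hi hj
    · exfalso; rw [h] at hi; exact hi hj
    · rw [sub_right_injective h]
    · rw [h]
  have hθbij : Function.Bijective (dTheta t) := Finite.injective_iff_bijective.mp hθinj
  -- pi (the product map) is injective (hence bijective)
  set π : ZMod t × Bool → ZMod t × Bool := fun k => dComb (dTheta t k) k with hπdef
  have hπinj : Function.Injective π := by
    rintro ⟨i, ε⟩ ⟨j, δ⟩ h
    by_cases hi : i.val < t/2 <;> by_cases hj : j.val < t/2 <;> cases ε <;> cases δ <;>
      simp only [hπdef, dTheta, dComb, hi, hj, Bool.cond_false, Bool.cond_true, ite_true, ite_false, if_true, if_false,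
        Bool.xor_false, Bool.xor_true, Bool.not_true, Bool.not_false,
        Prod.mk.injEq, Bool.false_eq_true, Bool.true_eq_false, and_true, and_false] at h
    -- remaining goals: same-side, same output type
    · rw [hL2A i j hi hj h]
    · exfalso
      exact hL1 (i + j) (by linear_combination h)
    · exfalso
      exact hL1 (i + j) (by linear_combination -h)
    · have : i + i = j + j := by linear_combination -h
      rw [hL2A i j hi hj this]
    · have : i + i = j + j := by linear_combination -h
      rw [hL2B i j (le_of_not_gt hi) (le_of_not_gt hj) this]
    · exfalso
      exact hL1 (i + j) (by linear_combination -h)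
    · exfalso
      exact hL1 (i + j) (by linear_combination h)
    · rw [hL2B i j (le_of_not_gt hi) (le_of_not_gt hj) h]
  have hπbij : Function.Bijective π := Finite.injective_iff_bijective.mp hπinj
  set πe : (ZMod t × Bool) ≃ (ZMod t × Bool) := Equiv.ofBijective π hπbij with hπe
  -- assemble the companion permutation
  refine ⟨(e.symm.trans πe).trans e, ?_⟩
  intro g hgG
  obtain ⟨p, rfl⟩ := hclass g hgG
  obtain ⟨k₀, hk₀⟩ := hθbij.surjective p
  have happ : ∀ k : ZMod t × Bool,
      ((e.symm.trans πe).trans e) (e k) = e (dComb (dTheta t k) k) := by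
    intro k
    simp only [Equiv.trans_apply, Equiv.symm_apply_apply]
    rfl
  have hgapp : ∀ k : ZMod t × Bool, dElem b a p (e k) = e (dComb p k) := by
    intro k
    rw [heapp, heapp, helem_mul]
    rfl
  refine ⟨e k₀, ?_, ?_⟩
  · show ((e.symm.trans πe).trans e) (e k₀) = (dElem b a p) (e k₀)
    rw [happ k₀, hgapp k₀, hk₀]
  · intro x hx
    replace hx : ((e.symm.trans πe).trans e) x = (dElem b a p) x := hx
    have hx' : x = e (e.symm x) := (e.apply_symm_apply x).symm
    set k := e.symm x with hk
    rw [hx'] at hx ⊢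
    rw [happ k, hgapp k] at hx
    have h1 : dComb (dTheta t k) k = dComb p k := e.injective hx
    have h2 : dElem b a (dTheta t k) * dElem b a k = dElem b a p * dElem b a k := by
      rw [← helem_mul, ← helem_mul, h1]
    have h3 : dTheta t k = p := helem_inj (mul_right_cancel h2)
    have h4 : k = k₀ := hθinj (h3.trans hk₀.symm)
    rw [h4]
end
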